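/- The softmax map s ↦ (exp(s_j)/Σ_i exp(s_i))_{j=1}^n from ℝ^n to the probability simplex is 1-Lipschitz with respect to the Euclidean norm: ‖softmax(s) − softmax(t)‖₂ ≤ ‖s − t‖₂ for all s, t ∈ ℝ^n. -/

import Mathlib

/-!
At `s`, with `a = softmax s`, the Jacobian of softmax is `J = diag a - a aᵀ`, so
`(J v)ⱼ = aⱼ (vⱼ - m)` with `m = ∑ᵢ aᵢ vᵢ`. Since `0 ≤ aⱼ ≤ 1` and `∑ a ≤ 1`,
`‖J v‖² ≤ ∑ⱼ aⱼ (vⱼ - m)² ≤ ∑ⱼ aⱼ vⱼ² ≤ ‖v‖²`: the middle step says that a variance is at most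
the second moment. Hence `‖J‖ ≤ 1` everywhere, and the mean value inequality gives the claim.
-/

noncomputable section

/-- The softmax map on ℝⁿ (with the Euclidean norm). -/
def softmax {n : ℕ} (s : EuclideanSpace ℝ (Fin n)) : EuclideanSpace ℝ (Fin n) :=
  WithLp.toLp 2 (fun j => Real.exp (s j) / ∑ i, Real.exp (s i))

open Matrix

def softmaxJacobian {ι : Type*} [Fintype ι] [DecidableEq ι] (a : ι → ℝ) : Matrix ι ι ℝ :=
  diagonal a - vecMulVec a a

section Jacobian

variable {ι : Type*} [Fintype ι]

lemma softmaxJacobian_mulVec_apply [DecidableEq ι] (a v : ι → ℝ) (j : ι) :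
    (softmaxJacobian a *ᵥ v) j = a j * (v j - a ⬝ᵥ v) := by
  simp only [softmaxJacobian, sub_mulVec, mulVec_diagonal, vecMulVec_mulVec, Pi.sub_apply,
    Pi.smul_apply, MulOpposite.smul_eq_mul_unop, MulOpposite.unop_op]
  ring

lemma sum_mul_sq_sub_dotProduct_le {a : ι → ℝ} (hsum : ∑ i, a i ≤ 1) (v : ι → ℝ) :
    ∑ j, a j * (v j - a ⬝ᵥ v) ^ 2 ≤ ∑ j, a j * v j ^ 2 := by
  set m := a ⬝ᵥ v
  have hexpand :
      ∑ j, a j * (v j - m) ^ 2 = ∑ j, a j * v j ^ 2 - 2 * m * m + m ^ 2 * ∑ j, a j := by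
    have hterm (j : ι) :
        a j * (v j - m) ^ 2 = a j * v j ^ 2 - 2 * m * (a j * v j) + m ^ 2 * a j := by ring
    simp only [hterm, Finset.sum_add_distrib, Finset.sum_sub_distrib, ← Finset.mul_sum]
    rfl
  rw [hexpand]
  nlinarith [sq_nonneg m]

lemma sum_sq_softmaxJacobian_mulVec_le [DecidableEq ι] {a : ι → ℝ} (ha : 0 ≤ a)
    (hsum : ∑ i, a i ≤ 1) (v : ι → ℝ) :
    ∑ j, (softmaxJacobian a *ᵥ v) j ^ 2 ≤ ∑ j, v j ^ 2 := by
  have ha_le_one (j : ι) : a j ≤ 1 :=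
    (Finset.single_le_sum (fun i _ => ha i) (Finset.mem_univ j)).trans hsum
  calc ∑ j, (softmaxJacobian a *ᵥ v) j ^ 2
      ≤ ∑ j, a j * (v j - a ⬝ᵥ v) ^ 2 := Finset.sum_le_sum fun j _ => by
        rw [softmaxJacobian_mulVec_apply, mul_pow]
        exact mul_le_mul_of_nonneg_right (pow_le_of_le_one (ha j) (ha_le_one j) two_ne_zero)
          (sq_nonneg _)
    _ ≤ ∑ j, a j * v j ^ 2 := sum_mul_sq_sub_dotProduct_le hsum v
    _ ≤ ∑ j, v j ^ 2 := Finset.sum_le_sum fun j _ =>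
        mul_le_of_le_one_left (sq_nonneg _) (ha_le_one j)

lemma norm_toEuclideanCLM_softmaxJacobian_le [DecidableEq ι] {a : ι → ℝ} (ha : 0 ≤ a)
    (hsum : ∑ i, a i ≤ 1) : ‖toEuclideanCLM (𝕜 := ℝ) (softmaxJacobian a)‖ ≤ 1 := by
  refine ContinuousLinearMap.opNorm_le_bound _ zero_le_one fun v => ?_
  rw [one_mul, ← sq_le_sq₀ (norm_nonneg _) (norm_nonneg _), EuclideanSpace.real_norm_sq_eq,
    EuclideanSpace.real_norm_sq_eq]
  exact sum_sq_softmaxJacobian_mulVec_le ha hsum v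

end Jacobian

section Softmax

variable {n : ℕ}

lemma softmax_nonneg (s : EuclideanSpace ℝ (Fin n)) : 0 ≤ (softmax s).ofLp := fun j => by
  unfold softmax
  positivity

-- The sum is `1` for `n ≠ 0`, but `0` for `n = 0`.
lemma sum_softmax_le_one (s : EuclideanSpace ℝ (Fin n)) : ∑ j, softmax s j ≤ 1 := by
  simp only [softmax, ← Finset.sum_div]
  exact div_self_le_one _

lemma hasFDerivAt_softmax (s : EuclideanSpace ℝ (Fin n)) :
    HasFDerivAt softmax (toEuclideanCLM (𝕜 := ℝ) (softmaxJacobian (softmax s).ofLp)) s := by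
  rw [← hasFDerivWithinAt_univ, hasFDerivWithinAt_piLp]
  intro j
  rw [hasFDerivWithinAt_univ]
  set Z : EuclideanSpace ℝ (Fin n) → ℝ := fun x => ∑ i, Real.exp (x i)
  have hexp (i : Fin n) : HasFDerivAt (fun x : EuclideanSpace ℝ (Fin n) => Real.exp (x i))
      (Real.exp (s i) • PiLp.proj 2 _ i) s :=
    (PiLp.hasFDerivAt_apply 2 s i).exp
  have hZ : HasFDerivAt Z (∑ i, Real.exp (s i) • PiLp.proj 2 _ i) s :=
    HasFDerivAt.fun_sum fun i _ => hexp i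
  have hZ_ne : Z s ≠ 0 := (Finset.sum_pos (fun i _ => Real.exp_pos _) ⟨j, Finset.mem_univ j⟩).ne'
  have hcomp : (fun x => softmax x j) = fun x => Real.exp (x j) * (Z x)⁻¹ := by
    funext x
    simp [softmax, div_eq_mul_inv, Z]
  rw [hcomp]
  refine ((hexp j).mul ((hasDerivAt_inv hZ_ne).comp_hasFDerivAt s hZ)).congr_fderiv ?_
  ext v
  simp only [Z] at hZ_ne
  simp only [neg_smul, smul_neg, Function.comp_apply, _root_.add_apply, _root_.neg_apply,
    _root_.smul_apply, _root_.sum_apply,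
    PiLp.proj_apply, smul_eq_mul, softmax, ContinuousLinearMap.comp_apply, ofLp_toEuclideanCLM,
    softmaxJacobian_mulVec_apply, dotProduct, Z, div_mul_eq_mul_div, ← Finset.sum_div]
  field_simp
  ring

end Softmax

/-- Softmax is 1-Lipschitz with respect to the Euclidean norm. -/
theorem softmax_lipschitz {n : ℕ} (s t : EuclideanSpace ℝ (Fin n)) :
    ‖softmax s - softmax t‖ ≤ ‖s - t‖ := by
  simpa using convex_univ.norm_image_sub_le_of_norm_hasFDerivWithin_le
    (fun x _ => (hasFDerivAt_softmax x).hasFDerivWithinAt)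
    (fun x _ => norm_toEuclideanCLM_softmaxJacobian_le (softmax_nonneg x) (sum_softmax_le_one x))
    (Set.mem_univ t) (Set.mem_univ s)

end
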